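/- For $e_1,e_2,f$ as above, set $W_w(e_1,e_2,-f) = \mathrm{wind}(e_1,-f) + \mathrm{wind}(-e_2,-e_1) - \mathrm{wind}(-e_2,-f) + \epsilon_2(e_1) + 1$ and $W_b(e_1,e_2,f) = \mathrm{wind}(f,e_2) - \mathrm{wind}(f,-e_1) - \mathrm{wind}(e_1,e_2) - \epsilon_2(e_1)$. Then $W_b(e_1,e_2,f) = W_w(e_1,e_2,-f) - 2$. -/

import Mathlib

open scoped Classical

/-- The determinant of the `2×2` matrix with columns `x, y`; nonzero iff `x,y` not parallel. -/
noncomputable def det2 (x y : ℝ × ℝ) : ℝ := x.1 * y.2 - x.2 * y.1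

/-- The orientation sign `s(x,y) ∈ {±1}` of an ordered pair of (non-parallel) plane vectors. -/
noncomputable def sgn (x y : ℝ × ℝ) : ℝ := Real.sign (det2 x y)

/-- The index `ε₂(x) = (1 - s(x,𝔩))/2` of a vector `x` with respect to the gauge direction `l`. -/
noncomputable def eps2 (l x : ℝ × ℝ) : ℝ := (1 - sgn x l) / 2

/-- The local winding number of the ordered pair `(a,b)` with respect to the gauge
direction `l`. -/
noncomputable def wind (l a b : ℝ × ℝ) : ℝ :=
  if sgn a b = 1 ∧ sgn a l = 1 ∧ sgn l b = 1 then 1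
  else if sgn a b = -1 ∧ sgn a l = -1 ∧ sgn l b = -1 then -1
  else 0

/-- The black-vertex index `W_b(e₁,e₂,f)`. -/
noncomputable def Wb (l e1 e2 f : ℝ × ℝ) : ℝ :=
  wind l f e2 - wind l f (-e1) - wind l e1 e2 - eps2 l e1

/-- The white-vertex index
`W_w(e₁,e₂,-f) = wind(e₁,-f) + wind(-e₂,-e₁) - wind(-e₂,-f) + ε₂(e₁) + 1`. -/
noncomputable def Ww (l e1 e2 f : ℝ × ℝ) : ℝ :=
  wind l e1 (-f) + wind l (-e2) (-e1) - wind l (-e2) (-f) + eps2 l e1 + 1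

/-! For signs `p, q, r ∈ {±1}`, the winding number `wind` equals the polynomial
`(p + q + r + p q r) / 4`. Since `s` is antisymmetric and odd in each argument, every sign
occurring in `W_b` and `W_w` is `±` one of the six signs of pairs taken from `e₁, e₂, f, 𝔩`,
and both sides of the identity become the same polynomial in these six signs. -/

lemma det2_swap (x y : ℝ × ℝ) : det2 y x = -det2 x y := by
  simp only [det2]; ring

lemma det2_neg_left (x y : ℝ × ℝ) : det2 (-x) y = -det2 x y := by
  simp only [det2, Prod.fst_neg, Prod.snd_neg]; ring

lemma det2_neg_right (x y : ℝ × ℝ) : det2 x (-y) = -det2 x y := by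
  simp only [det2, Prod.fst_neg, Prod.snd_neg]; ring

lemma sgn_swap (x y : ℝ × ℝ) : sgn y x = -sgn x y := by
  rw [sgn, sgn, det2_swap, Real.sign_neg]

lemma sgn_neg_left (x y : ℝ × ℝ) : sgn (-x) y = -sgn x y := by
  rw [sgn, sgn, det2_neg_left, Real.sign_neg]

lemma sgn_neg_right (x y : ℝ × ℝ) : sgn x (-y) = -sgn x y := by
  rw [sgn, sgn, det2_neg_right, Real.sign_neg]

lemma sgn_eq_one_or_neg_one {x y : ℝ × ℝ} (h : det2 x y ≠ 0) :
    sgn x y = 1 ∨ sgn x y = -1 :=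
  (Real.sign_apply_eq_of_ne_zero _ h).symm

lemma wind_eq_of_det_ne_zero {l a b : ℝ × ℝ} (hab : det2 a b ≠ 0) (hal : det2 a l ≠ 0)
    (hlb : det2 l b ≠ 0) :
    wind l a b = (sgn a b + sgn a l + sgn l b + sgn a b * sgn a l * sgn l b) / 4 := by
  rcases sgn_eq_one_or_neg_one hab with h₁ | h₁ <;>
    rcases sgn_eq_one_or_neg_one hal with h₂ | h₂ <;>
    rcases sgn_eq_one_or_neg_one hlb with h₃ | h₃ <;>
    norm_num [wind, h₁, h₂, h₃]

/-- (Lemma `lem:indip`, first identity of eq. (wind_bw_rel).)  For pairwise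
non-parallel plane vectors `e₁, e₂, f` and an admissible gauge direction `𝔩`,
`W_b(e₁,e₂,f) = W_w(e₁,e₂,-f) - 2`. -/
theorem Wb_eq_Ww_sub_two (e1 e2 f l : ℝ × ℝ)
    (h12 : det2 e1 e2 ≠ 0) (h1f : det2 e1 f ≠ 0) (h2f : det2 e2 f ≠ 0)
    (h1l : det2 e1 l ≠ 0) (h2l : det2 e2 l ≠ 0) (hfl : det2 f l ≠ 0) :
    Wb l e1 e2 f = Ww l e1 e2 f - 2 := by
  simp (disch := simp only [det2_neg_left, det2_neg_right, det2_swap _ l, det2_swap e1 e2,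
      det2_swap e1 f, det2_swap e2 f, neg_neg, ne_eq, neg_eq_zero, *, not_false_eq_true])
    only [Wb, Ww, eps2, wind_eq_of_det_ne_zero]
  simp only [sgn_neg_left, sgn_neg_right, sgn_swap _ l, sgn_swap e1 e2, sgn_swap e1 f,
    sgn_swap e2 f, neg_neg]
  ring
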